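/- Let G be the vector space 𝔤 = ℝ⁷ (with the nilpotent bracket of the specified Lie algebra, rescaled basis u₁,…,u₇) endowed with the truncated BCH product. Then the set Γ = { Σᵢ nᵢuᵢ : nᵢ ∈ ℤ } is a subgroup of (G, *). -/
import Mathlib


/-- The bracket of the Lie algebra `𝔤` in the rescaled basis `u₁ = e₁`, `u₂ = e₂`,
`u₃ = e₃`, `u₄ = e₄/2`, `u₅ = e₅/2`, `u₆ = e₆/2`, `u₇ = e₇/6` (0-based coordinates):
`[u₁,u₂] = −2u₄`, `[u₂,u₃] = −2u₅`, `[u₁,u₃] = 2u₆`, `[u₁,u₆] = 6u₇`, `[u₂,u₅] = −6u₇`,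
`[u₂,u₆] = −6u₇`, `[u₃,u₄] = 6u₇`. -/
def uBracket (x y : Fin 7 → ℝ) : Fin 7 → ℝ :=
  ![0, 0, 0,
    -2 * (x 0 * y 1 - x 1 * y 0),
    -2 * (x 1 * y 2 - x 2 * y 1),
    2 * (x 0 * y 2 - x 2 * y 0),
    6 * (x 0 * y 5 - x 5 * y 0) - 6 * (x 1 * y 4 - x 4 * y 1)
      - 6 * (x 1 * y 5 - x 5 * y 1) + 6 * (x 2 * y 3 - x 3 * y 2)]

/-- The truncated BCH product `x * y = x + y + ½[x,y] + (1/12)([x,[x,y]] − [y,[x,y]])`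
making `G = (𝔤, *)` the simply connected Lie group of `𝔤`. -/
noncomputable def uMul (x y : Fin 7 → ℝ) : Fin 7 → ℝ :=
  x + y + (1/2 : ℝ) • uBracket x y +
    (1/12 : ℝ) • (uBracket x (uBracket x y) - uBracket y (uBracket x y))

/-- The integer lattice `Γ = { Σ nᵢuᵢ : nᵢ ∈ ℤ }` in `G`. -/
def latticeGamma : Set (Fin 7 → ℝ) := {x | ∀ i, ∃ n : ℤ, x i = n}

lemma uBracket_zero (x y : Fin 7 → ℝ) : uBracket x y 0 = 0 := rfl
lemma uBracket_one (x y : Fin 7 → ℝ) : uBracket x y 1 = 0 := rfl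
lemma uBracket_two (x y : Fin 7 → ℝ) : uBracket x y 2 = 0 := rfl
lemma uBracket_three (x y : Fin 7 → ℝ) :
    uBracket x y 3 = -2 * (x 0 * y 1 - x 1 * y 0) := rfl
lemma uBracket_four (x y : Fin 7 → ℝ) :
    uBracket x y 4 = -2 * (x 1 * y 2 - x 2 * y 1) := rfl
lemma uBracket_five (x y : Fin 7 → ℝ) :
    uBracket x y 5 = 2 * (x 0 * y 2 - x 2 * y 0) := rfl
lemma uBracket_six (x y : Fin 7 → ℝ) :
    uBracket x y 6 = 6 * (x 0 * y 5 - x 5 * y 0) - 6 * (x 1 * y 4 - x 4 * y 1)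
      - 6 * (x 1 * y 5 - x 5 * y 1) + 6 * (x 2 * y 3 - x 3 * y 2) := rfl

lemma uMul_apply (x y : Fin 7 → ℝ) (i : Fin 7) :
    uMul x y i = x i + y i + (1/2 : ℝ) * uBracket x y i +
      (1/12 : ℝ) * (uBracket x (uBracket x y) i - uBracket y (uBracket x y) i) := rfl

/-- `Γ` is a subgroup of `(G, *)`: it contains the identity `0`, is closed under the
BCH product, and is closed under inversion `x ↦ −x`. -/
theorem latticeGamma_subgroup :
    (0 : Fin 7 → ℝ) ∈ latticeGamma ∧
    (∀ x ∈ latticeGamma, ∀ y ∈ latticeGamma, uMul x y ∈ latticeGamma) ∧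
    (∀ x ∈ latticeGamma, -x ∈ latticeGamma) := by
  refine ⟨fun i => ⟨0, by simp⟩, ?_, ?_⟩
  · intro x hx y hy
    choose n hn using hx
    choose m hm using hy
    intro i
    fin_cases i
    · exact ⟨n 0 + m 0, by
        show uMul x y 0 = _
        rw [uMul_apply, uBracket_zero, uBracket_zero, uBracket_zero]
        simp only [hn, hm]
        push_cast; ring⟩
    · exact ⟨n 1 + m 1, by
        show uMul x y 1 = _
        rw [uMul_apply, uBracket_one, uBracket_one, uBracket_one]
        simp only [hn, hm]
        push_cast; ring⟩
    · exact ⟨n 2 + m 2, by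
        show uMul x y 2 = _
        rw [uMul_apply, uBracket_two, uBracket_two, uBracket_two]
        simp only [hn, hm]
        push_cast; ring⟩
    · exact ⟨n 3 + m 3 - (n 0 * m 1 - n 1 * m 0), by
        show uMul x y 3 = _
        rw [uMul_apply, uBracket_three, uBracket_three, uBracket_three,
          uBracket_zero, uBracket_one]
        simp only [hn, hm]
        push_cast; ring⟩
    · exact ⟨n 4 + m 4 - (n 1 * m 2 - n 2 * m 1), by
        show uMul x y 4 = _
        rw [uMul_apply, uBracket_four, uBracket_four, uBracket_four,
          uBracket_one, uBracket_two]
        simp only [hn, hm]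
        push_cast; ring⟩
    · exact ⟨n 5 + m 5 + (n 0 * m 2 - n 2 * m 0), by
        show uMul x y 5 = _
        rw [uMul_apply, uBracket_five, uBracket_five, uBracket_five,
          uBracket_zero, uBracket_two]
        simp only [hn, hm]
        push_cast; ring⟩
    · exact ⟨n 6 + m 6
        + 3 * ((n 0 * m 5 - n 5 * m 0) - (n 1 * m 4 - n 4 * m 1)
            - (n 1 * m 5 - n 5 * m 1) + (n 2 * m 3 - n 3 * m 2))
        + (n 0 * (n 0 * m 2 - n 2 * m 0) + n 1 * (n 1 * m 2 - n 2 * m 1)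
            - n 1 * (n 0 * m 2 - n 2 * m 0) - n 2 * (n 0 * m 1 - n 1 * m 0))
        - (m 0 * (n 0 * m 2 - n 2 * m 0) + m 1 * (n 1 * m 2 - n 2 * m 1)
            - m 1 * (n 0 * m 2 - n 2 * m 0) - m 2 * (n 0 * m 1 - n 1 * m 0)), by
        show uMul x y 6 = _
        rw [uMul_apply, uBracket_six, uBracket_six, uBracket_six,
          uBracket_zero, uBracket_one, uBracket_two, uBracket_three, uBracket_four,
          uBracket_five]
        simp only [hn, hm]
        push_cast; ring⟩
  · intro x hx
    choose n hn using hx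
    intro i
    exact ⟨-n i, by simp [hn i]⟩
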